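/- The two Hamiltonians H̄₁ = p₁² − q₂p₂² + q₁³ − 2q₁q₂ + c̄/q₂ and H̄₂ = −2q₂p₁p₂ − q₁q₂p₂² + q₁²q₂ − q₂² + c̄·q₁/q₂, defined on the open set {q₂ ≠ 0} of ℝ⁴, Poisson-commute with respect to the canonical Poisson bracket. -/

import Mathlib

/-- Canonical Poisson bracket on ℝ⁴ with coordinates (q₁,q₂,p₁,p₂). -/
noncomputable def pb (F G : ℝ → ℝ → ℝ → ℝ → ℝ) (q1 q2 p1 p2 : ℝ) : ℝ :=
    (deriv (fun t => F t q2 p1 p2) q1) * (deriv (fun t => G q1 q2 t p2) p1)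
  + (deriv (fun t => F q1 t p1 p2) q2) * (deriv (fun t => G q1 q2 p1 t) p2)
  - (deriv (fun t => F q1 q2 t p2) p1) * (deriv (fun t => G t q2 p1 p2) q1)
  - (deriv (fun t => F q1 q2 p1 t) p2) * (deriv (fun t => G q1 t p1 p2) q2)

noncomputable def Hbar1 (cb : ℝ) (q1 q2 p1 p2 : ℝ) : ℝ :=
  p1^2 - q2*p2^2 + q1^3 - 2*q1*q2 + cb/q2

noncomputable def Hbar2 (cb : ℝ) (q1 q2 p1 p2 : ℝ) : ℝ :=
  -2*q2*p1*p2 - q1*q2*p2^2 + q1^2*q2 - q2^2 + cb*q1/q2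

section
variable {cb q1 q2 p1 p2 : ℝ}

theorem deriv_Hbar1_q1 : deriv (fun t => Hbar1 cb t q2 p1 p2) q1 = 3 * q1 ^ 2 - 2 * q2 := by
  simp (disch := fun_prop) [Hbar1]

theorem deriv_Hbar1_q2 (hq2 : q2 ≠ 0) :
    deriv (fun t => Hbar1 cb q1 t p1 p2) q2 = -p2 ^ 2 - 2 * q1 - cb / q2 ^ 2 := by
  simp (disch := fun_prop (disch := assumption)) [Hbar1]
  ring

theorem deriv_Hbar1_p1 : deriv (fun t => Hbar1 cb q1 q2 t p2) p1 = 2 * p1 := by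
  simp (disch := fun_prop) [Hbar1]

theorem deriv_Hbar1_p2 : deriv (fun t => Hbar1 cb q1 q2 p1 t) p2 = -2 * q2 * p2 := by
  simp (disch := fun_prop) [Hbar1]
  ring

theorem deriv_Hbar2_q1 :
    deriv (fun t => Hbar2 cb t q2 p1 p2) q1 = -q2 * p2 ^ 2 + 2 * q1 * q2 + cb / q2 := by
  simp (disch := fun_prop) [Hbar2]

theorem deriv_Hbar2_q2 (hq2 : q2 ≠ 0) :
    deriv (fun t => Hbar2 cb q1 t p1 p2) q2 =
      -2 * p1 * p2 - q1 * p2 ^ 2 + q1 ^ 2 - 2 * q2 - cb * q1 / q2 ^ 2 := by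
  simp (disch := fun_prop (disch := assumption)) [Hbar2]
  ring

theorem deriv_Hbar2_p1 : deriv (fun t => Hbar2 cb q1 q2 t p2) p1 = -2 * q2 * p2 := by
  simp (disch := fun_prop) [Hbar2]

theorem deriv_Hbar2_p2 :
    deriv (fun t => Hbar2 cb q1 q2 p1 t) p2 = -2 * q2 * p1 - 2 * q1 * q2 * p2 := by
  simp (disch := fun_prop) [Hbar2]
  ring

end

theorem stmt2 (cb : ℝ) :
    ∀ q1 q2 p1 p2 : ℝ, q2 ≠ 0 → pb (Hbar1 cb) (Hbar2 cb) q1 q2 p1 p2 = 0 := by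
  intro q1 q2 p1 p2 hq2
  rw [pb, deriv_Hbar1_q1, deriv_Hbar1_q2 hq2, deriv_Hbar1_p1, deriv_Hbar1_p2,
    deriv_Hbar2_q1, deriv_Hbar2_q2 hq2, deriv_Hbar2_p1, deriv_Hbar2_p2]
  field_simp
  ring
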